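/- arXiv:1809.08603 — 4 statements merged into one kernel-verified Lean document; each statement's English description precedes it below -/
import Mathlib

section
/- A unital algebra A over a commutative ring T is separable if and only if the first Hochschild cohomology H¹(A, M) vanishes for every (A,A)-bimodule M. -/
set_option synthInstance.maxHeartbeats 1000000
open scoped TensorProduct
open MulOpposite

universe u v

variable {T : Type u} {A : Type v} [CommRing T] [Ring A] [Algebra T A]

/-- `A` as a module over its enveloping algebra `A^e = A ⊗[T] Aᵐᵒᵖ`. -/
noncomputable instance (priority := 100) aeModule : Module (A ⊗[T] Aᵐᵒᵖ) A :=
  TensorProduct.Algebra.module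

/-!
Both sides are equivalent to the existence of a separability idempotent: an `e ∈ A ⊗ Aᵐᵒᵖ` with
`μ e = 1` and `(x ⊗ 1) e = (1 ⊗ x) e`, where `μ (a ⊗ b) = a b`. A splitting `σ` of `μ` gives
`e = σ 1`, and `e` gives the splitting `a ↦ (a ⊗ 1) e`. If `e = ∑ aᵢ ⊗ bᵢ`, every derivation `d`
is inner, induced by `∑ aᵢ • d bᵢ`. Conversely, if the universal derivation `a ↦ a ⊗ 1 - 1 ⊗ a`
into `Ω¹A = ker μ` is induced by `ω`, then `1 - ω` is a separability idempotent.
-/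

open Algebra.TensorProduct (tmul_mul_tmul)

theorem tmul_smul_eq_mul_mul (a x : A) (b : Aᵐᵒᵖ) : (a ⊗ₜ[T] b) • x = a * x * unop b := by
  rw [TensorProduct.Algebra.smul_def, MulOpposite.smul_eq_mul_unop, smul_eq_mul, mul_assoc]

variable (T A) in
noncomputable def envMul : A ⊗[T] Aᵐᵒᵖ →ₗ[A ⊗[T] Aᵐᵒᵖ] A :=
  LinearMap.toSpanSingleton _ _ 1

theorem envMul_apply (s : A ⊗[T] Aᵐᵒᵖ) : envMul T A s = s • 1 := rfl

theorem envMul_tmul (a : A) (b : Aᵐᵒᵖ) : envMul T A (a ⊗ₜ b) = a * unop b := by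
  rw [envMul_apply, tmul_smul_eq_mul_mul, mul_one]

theorem envMul_surjective : Function.Surjective (envMul T A) :=
  fun a => ⟨a ⊗ₜ 1, by rw [envMul_tmul, unop_one, mul_one]⟩

def IsSeparabilityIdempotent (e : A ⊗[T] Aᵐᵒᵖ) : Prop :=
  envMul T A e = 1 ∧ ∀ x : A, (x ⊗ₜ[T] (1 : Aᵐᵒᵖ)) * e = (1 ⊗ₜ op x) * e

namespace IsSeparabilityIdempotent

variable {e : A ⊗[T] Aᵐᵒᵖ} (he : IsSeparabilityIdempotent e)
include he

theorem smul_tmul_one_mul (s : A ⊗[T] Aᵐᵒᵖ) (a : A) :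
    ((s • a) ⊗ₜ[T] (1 : Aᵐᵒᵖ)) * e = s * ((a ⊗ₜ 1) * e) := by
  induction s using TensorProduct.induction_on with
  | zero => rw [zero_smul (A ⊗[T] Aᵐᵒᵖ) a, TensorProduct.zero_tmul, zero_mul, zero_mul]
  | tmul x b =>
    calc ((x ⊗ₜ b) • a) ⊗ₜ[T] (1 : Aᵐᵒᵖ) * e = ((x * a) ⊗ₜ 1) * ((unop b ⊗ₜ 1) * e) := by
          rw [tmul_smul_eq_mul_mul, ← mul_assoc, tmul_mul_tmul, mul_one]
      _ = ((x * a) ⊗ₜ 1) * ((1 ⊗ₜ b) * e) := by rw [he.2, op_unop]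
      _ = (x ⊗ₜ b) * ((a ⊗ₜ 1) * e) := by
          simp only [← mul_assoc, tmul_mul_tmul, mul_one, one_mul]
  | add s t hs ht => rw [add_smul, TensorProduct.add_tmul, add_mul, hs, ht, add_mul]

noncomputable def splitting : A →ₗ[A ⊗[T] Aᵐᵒᵖ] A ⊗[T] Aᵐᵒᵖ where
  toFun a := (a ⊗ₜ 1) * e
  map_add' a b := by rw [TensorProduct.add_tmul, add_mul]
  map_smul' := he.smul_tmul_one_mul

theorem envMul_comp_splitting : envMul T A ∘ₗ he.splitting = LinearMap.id := by
  refine LinearMap.ext fun a => ?_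
  show envMul T A ((a ⊗ₜ[T] (1 : Aᵐᵒᵖ)) • e) = a
  rw [map_smul, he.1, tmul_smul_eq_mul_mul, unop_one, mul_one, mul_one]

end IsSeparabilityIdempotent

theorem projective_iff_exists_isSeparabilityIdempotent :
    Module.Projective (A ⊗[T] Aᵐᵒᵖ) A ↔ ∃ e : A ⊗[T] Aᵐᵒᵖ, IsSeparabilityIdempotent e := by
  refine ⟨fun _ => ?_, fun ⟨_, he⟩ => .of_split he.splitting (envMul T A) he.envMul_comp_splitting⟩
  obtain ⟨σ, hσ⟩ := Module.projective_lifting_property (envMul T A) LinearMap.id envMul_surjective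
  refine ⟨σ 1, LinearMap.congr_fun hσ 1, fun x => ?_⟩
  have h : (x ⊗ₜ[T] (1 : Aᵐᵒᵖ)) • (1 : A) = ((1 : A) ⊗ₜ[T] op x) • (1 : A) := by
    rw [tmul_smul_eq_mul_mul, tmul_smul_eq_mul_mul, unop_one, unop_op, mul_one, mul_one, one_mul,
      one_mul]
  simpa only [map_smul, smul_eq_mul] using congrArg σ h

section Derivation

variable {M : Type*} [AddCommGroup M] [Module T M] [Module A M] [IsScalarTower T A M]

noncomputable def derivLift (d : A →ₗ[T] M) : A ⊗[T] Aᵐᵒᵖ →ₗ[T] M :=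
  TensorProduct.lift <| LinearMap.mk₂ T (fun a b => a • d (unop b))
    (fun a a' b => add_smul a a' _)
    (fun t a b => smul_assoc t a _)
    (fun a b b' => by rw [unop_add, map_add, smul_add])
    (fun t a b => by rw [unop_smul, map_smul, smul_comm])

theorem derivLift_tmul (d : A →ₗ[T] M) (a : A) (b : Aᵐᵒᵖ) :
    derivLift d (a ⊗ₜ b) = a • d (unop b) := rfl

theorem derivLift_tmul_one_mul (d : A →ₗ[T] M) (x : A) (s : A ⊗[T] Aᵐᵒᵖ) :
    derivLift d ((x ⊗ₜ (1 : Aᵐᵒᵖ)) * s) = x • derivLift d s := by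
  induction s using TensorProduct.induction_on with
  | zero => rw [mul_zero, map_zero, smul_zero]
  | tmul a b => rw [tmul_mul_tmul, one_mul, derivLift_tmul, derivLift_tmul, mul_smul]
  | add s t hs ht => rw [mul_add, map_add, hs, ht, map_add, smul_add]

variable [Module Aᵐᵒᵖ M] [SMulCommClass A Aᵐᵒᵖ M]

theorem op_smul_derivLift (d : A →ₗ[T] M) (hd : ∀ x y : A, d (x * y) = x • d y + op y • d x)
    (x : A) (s : A ⊗[T] Aᵐᵒᵖ) :
    op x • derivLift d s = derivLift d (((1 : A) ⊗ₜ op x) * s) - envMul T A s • d x := by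
  induction s using TensorProduct.induction_on with
  | zero => rw [map_zero, smul_zero, mul_zero, map_zero, map_zero, zero_smul, sub_zero]
  | tmul a b =>
    have hb : op x • d (unop b) = d (unop b * x) - unop b • d x := by
      rw [hd, add_sub_cancel_left]
    rw [tmul_mul_tmul, one_mul, derivLift_tmul, derivLift_tmul, envMul_tmul, ← smul_comm a,
      hb, smul_sub, unop_mul, unop_op, mul_smul]
  | add s t hs ht =>
    rw [map_add, smul_add, hs, ht, mul_add, map_add, map_add, add_smul]
    abel

theorem IsSeparabilityIdempotent.exists_eq_smul_sub_op_smul {e : A ⊗[T] Aᵐᵒᵖ}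
    (he : IsSeparabilityIdempotent e) (d : A →ₗ[T] M)
    (hd : ∀ x y : A, d (x * y) = x • d y + op y • d x) :
    ∃ m : M, ∀ x : A, d x = x • m - op x • m :=
  ⟨derivLift d e, fun x => by
    rw [← derivLift_tmul_one_mul, op_smul_derivLift d hd, he.2, he.1, one_smul, sub_sub_cancel]⟩

end Derivation

variable (T A) in
/-- `Ω¹A = ker envMul`, a bimodule through `A ⊗[T] Aᵐᵒᵖ`, lifted to `Type (max u v)` so that the theorem's
quantifier over bimodules reaches it. -/
def NCDifferentials : Type (max u v) := ULift.{u} (LinearMap.ker (envMul T A))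

namespace NCDifferentials

noncomputable instance : AddCommGroup (NCDifferentials T A) :=
  inferInstanceAs (AddCommGroup (ULift (LinearMap.ker (envMul T A))))

noncomputable instance : Module T (NCDifferentials T A) :=
  inferInstanceAs (Module T (ULift (LinearMap.ker (envMul T A))))

noncomputable instance : Module (A ⊗[T] Aᵐᵒᵖ) (NCDifferentials T A) :=
  inferInstanceAs (Module (A ⊗[T] Aᵐᵒᵖ) (ULift (LinearMap.ker (envMul T A))))

instance : IsScalarTower T (A ⊗[T] Aᵐᵒᵖ) (NCDifferentials T A) :=
  inferInstanceAs (IsScalarTower T (A ⊗[T] Aᵐᵒᵖ) (ULift (LinearMap.ker (envMul T A))))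

noncomputable instance : Module A (NCDifferentials T A) :=
  Module.compHom _ (Algebra.TensorProduct.includeLeftRingHom : A →+* A ⊗[T] Aᵐᵒᵖ)

noncomputable instance : Module Aᵐᵒᵖ (NCDifferentials T A) :=
  Module.compHom _ (Algebra.TensorProduct.includeRight : Aᵐᵒᵖ →ₐ[T] A ⊗[T] Aᵐᵒᵖ).toRingHom

theorem smul_def (a : A) (ω : NCDifferentials T A) : a • ω = (a ⊗ₜ[T] (1 : Aᵐᵒᵖ)) • ω := rfl

theorem op_smul_def (b : Aᵐᵒᵖ) (ω : NCDifferentials T A) : b • ω = ((1 : A) ⊗ₜ[T] b) • ω := rfl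

instance : IsScalarTower T A (NCDifferentials T A) :=
  ⟨fun t a ω => by rw [smul_def, smul_def, ← TensorProduct.smul_tmul', smul_assoc]⟩

instance : IsScalarTower T Aᵐᵒᵖ (NCDifferentials T A) :=
  ⟨fun t b ω => by rw [op_smul_def, op_smul_def, TensorProduct.tmul_smul, smul_assoc]⟩

instance : SMulCommClass A Aᵐᵒᵖ (NCDifferentials T A) :=
  ⟨fun a b ω => by
    rw [smul_def, op_smul_def, op_smul_def, smul_def, smul_smul, smul_smul, tmul_mul_tmul,
      tmul_mul_tmul, one_mul, mul_one, one_mul, mul_one]⟩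

noncomputable def val : NCDifferentials T A →ₗ[A ⊗[T] Aᵐᵒᵖ] A ⊗[T] Aᵐᵒᵖ :=
  (LinearMap.ker (envMul T A)).subtype ∘ₗ ULift.moduleEquiv.toLinearMap

theorem val_injective : Function.Injective (val (T := T) (A := A)) :=
  Subtype.val_injective.comp ULift.moduleEquiv.injective

theorem envMul_val (ω : NCDifferentials T A) : envMul T A (val ω) = 0 := ω.down.2

noncomputable def D : A →ₗ[T] NCDifferentials T A where
  toFun a := ⟨⟨a ⊗ₜ 1 - 1 ⊗ₜ op a, by
    rw [LinearMap.mem_ker, map_sub, envMul_tmul, envMul_tmul, unop_one, unop_op, mul_one,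
      one_mul, sub_self]⟩⟩
  map_add' a b := val_injective <| by
    show (a + b) ⊗ₜ[T] (1 : Aᵐᵒᵖ) - (1 : A) ⊗ₜ op (a + b) =
      (a ⊗ₜ 1 - 1 ⊗ₜ op a) + (b ⊗ₜ 1 - 1 ⊗ₜ op b)
    rw [op_add, TensorProduct.add_tmul, TensorProduct.tmul_add]
    abel
  map_smul' t a := val_injective <| by
    show (t • a) ⊗ₜ[T] (1 : Aᵐᵒᵖ) - (1 : A) ⊗ₜ op (t • a) = t • (a ⊗ₜ 1 - 1 ⊗ₜ op a)
    rw [op_smul, ← TensorProduct.smul_tmul', TensorProduct.tmul_smul, smul_sub]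

theorem val_D (a : A) : val (D (T := T) a) = a ⊗ₜ 1 - 1 ⊗ₜ op a := rfl

theorem D_mul (x y : A) : D (T := T) (x * y) = x • D y + op y • D x := val_injective <| by
  rw [map_add, smul_def, op_smul_def, map_smul, map_smul, val_D, val_D, val_D, smul_eq_mul,
    smul_eq_mul, mul_sub, mul_sub, tmul_mul_tmul, tmul_mul_tmul, tmul_mul_tmul, tmul_mul_tmul,
    op_mul]
  simp only [mul_one, one_mul]
  abel

theorem isSeparabilityIdempotent_one_sub_val {ω : NCDifferentials T A}
    (hω : ∀ x : A, D x = x • ω - op x • ω) : IsSeparabilityIdempotent (1 - val ω) := by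
  refine ⟨?_, fun x => ?_⟩
  · rw [map_sub, envMul_val, sub_zero, Algebra.TensorProduct.one_def, envMul_tmul, unop_one,
      mul_one]
  · have h := congrArg val (hω x)
    rw [val_D, map_sub, smul_def, op_smul_def, map_smul, map_smul, smul_eq_mul, smul_eq_mul] at h
    rw [mul_sub, mul_sub, mul_one, mul_one, sub_eq_sub_iff_sub_eq_sub, h]

end NCDifferentials

/-- `A` is separable over `T` iff the first Hochschild cohomology
`H¹(A,M)` vanishes for every `(A,A)`-bimodule `M`, i.e. iff every derivation
of `A` with values in any bimodule `M` is inner. -/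
theorem separable_iff_H1_vanishes :
    Module.Projective (A ⊗[T] Aᵐᵒᵖ) A ↔
      ∀ (M : Type (max u v)) [AddCommGroup M] [Module T M] [Module A M]
        [Module Aᵐᵒᵖ M] [IsScalarTower T A M] [IsScalarTower T Aᵐᵒᵖ M]
        [SMulCommClass A Aᵐᵒᵖ M],
        ∀ d : A →ₗ[T] M, (∀ x y : A, d (x * y) = x • d y + op y • d x) →
          ∃ m : M, ∀ x : A, d x = x • m - op x • m := by
  rw [projective_iff_exists_isSeparabilityIdempotent]
  refine ⟨fun ⟨_, he⟩ M _ _ _ _ _ _ _ d hd => he.exists_eq_smul_sub_op_smul d hd, fun H => ?_⟩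
  obtain ⟨ω, hω⟩ := H (NCDifferentials T A) NCDifferentials.D NCDifferentials.D_mul
  exact ⟨_, NCDifferentials.isSeparabilityIdempotent_one_sub_val hω⟩
end

section
/- (Wedderburn–Malcev lifting, square-zero case) Let A be a unital algebra over a commutative ring T, let J be a two-sided ideal with J² = 0, such that A/J is projective as a T-module and every Hochschild 2-cocycle of A/J with values in any (A/J)-bimodule is a coboundary (H²(A/J, M) = 0 for all M). Then there exists a T-subalgebra D of A with A = D ⊕ J as T-modules, and the quotient map restricts to an algebra isomorphism D ≅ A/J. -/
open MulOpposite

universe u v w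

namespace WMaux

variable {T : Type u} {A : Type v} {Q : Type w}
  [CommRing T] [Ring A] [Algebra T A] [Ring Q] [Algebra T Q]
  (J : Submodule T A)

/-- The bimodule carrier, bumped to the right universe. -/
abbrev M : Type (max u v w) := ULift.{max u w} (↥J)

variable (π : A →ₐ[T] Q)

theorem keyL (hJ2 : ∀ x ∈ J, ∀ y ∈ J, x * y = 0)
    (hker : ∀ a : A, π a = 0 ↔ a ∈ J)
    (a b : A) (hab : π a = π b) (u : A) (hu : u ∈ J) : a * u = b * u := by
  have h1 : a - b ∈ J := (hker _).1 (by rw [map_sub, hab, sub_self])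
  have h2 := hJ2 _ h1 _ hu
  rw [sub_mul] at h2
  exact sub_eq_zero.mp h2

theorem keyR (hJ2 : ∀ x ∈ J, ∀ y ∈ J, x * y = 0)
    (hker : ∀ a : A, π a = 0 ↔ a ∈ J)
    (a b : A) (hab : π a = π b) (u : A) (hu : u ∈ J) : u * a = u * b := by
  have h1 : a - b ∈ J := (hker _).1 (by rw [map_sub, hab, sub_self])
  have h2 := hJ2 _ hu _ h1
  rw [mul_sub] at h2
  exact sub_eq_zero.mp h2

theorem Mext (x y : M J) (h : (x.down : A) = y.down) : x = y :=
  ULift.ext _ _ (Subtype.ext h)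

variable
  (hJl : ∀ a : A, ∀ x ∈ J, a * x ∈ J) (hJr : ∀ a : A, ∀ x ∈ J, x * a ∈ J)
  (hJ2 : ∀ x ∈ J, ∀ y ∈ J, x * y = 0)
  (hker : ∀ a : A, π a = 0 ↔ a ∈ J)
  (s : Q →ₗ[T] A) (hs : ∀ q, π (s q) = q)

def modQ : Module Q (M J) where
  smul x u := ⟨⟨s x * u.down, hJl _ _ u.down.2⟩⟩
  one_smul u := Mext J _ _ <| by
    show s 1 * (u.down : A) = u.down
    rw [keyL J π hJ2 hker (s 1) 1 (by rw [hs, map_one]) _ u.down.2, one_mul]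
  mul_smul x y u := Mext J _ _ <| by
    show s (x * y) * (u.down : A) = s x * (s y * u.down)
    rw [keyL J π hJ2 hker (s (x * y)) (s x * s y)
      (by rw [hs, map_mul, hs, hs]) _ u.down.2, mul_assoc]
  smul_zero x := Mext J _ _ <| by
    show s x * (0 : A) = (0 : A)
    rw [mul_zero]
  smul_add x u v := Mext J _ _ <| by
    show s x * ((u.down : A) + v.down) = s x * u.down + s x * v.down
    rw [mul_add]
  add_smul x y u := Mext J _ _ <| by
    show s (x + y) * (u.down : A) = s x * u.down + s y * u.down
    rw [map_add, add_mul]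
  zero_smul u := Mext J _ _ <| by
    show s 0 * (u.down : A) = (0 : A)
    rw [map_zero, zero_mul]

def modQop : Module Qᵐᵒᵖ (M J) where
  smul y u := ⟨⟨u.down * s y.unop, hJr _ _ u.down.2⟩⟩
  one_smul u := Mext J _ _ <| by
    show (u.down : A) * s 1 = u.down
    rw [keyR J π hJ2 hker (s 1) 1 (by rw [hs, map_one]) _ u.down.2, mul_one]
  mul_smul x y u := Mext J _ _ <| by
    show (u.down : A) * s (y.unop * x.unop) = (u.down * s y.unop) * s x.unop
    rw [keyR J π hJ2 hker (s (y.unop * x.unop)) (s y.unop * s x.unop)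
      (by rw [hs, map_mul, hs, hs]) _ u.down.2, mul_assoc]
  smul_zero x := Mext J _ _ <| by
    show (0 : A) * s x.unop = (0 : A)
    rw [zero_mul]
  smul_add x u v := Mext J _ _ <| by
    show ((u.down : A) + v.down) * s x.unop = u.down * s x.unop + v.down * s x.unop
    rw [add_mul]
  add_smul x y u := Mext J _ _ <| by
    show (u.down : A) * s (x + y).unop = u.down * s x.unop + u.down * s y.unop
    rw [unop_add, map_add, mul_add]
  zero_smul u := Mext J _ _ <| by
    show (u.down : A) * s (0 : Qᵐᵒᵖ).unop = (0 : A)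
    rw [unop_zero, map_zero, mul_zero]

end WMaux

/-- Wedderburn–Malcev lifting, square-zero case: let `A` be a
unital `T`-algebra, `J` a two-sided ideal with `J² = 0`, and let
`π : A → Q` be a surjective algebra map with kernel `J` (so `Q ≅ A/J`).
If `Q` is projective as a `T`-module and every Hochschild 2-cocycle of `Q`
with values in any `Q`-bimodule is a coboundary (`H²(Q,M) = 0` for all `M`),
then there is a `T`-subalgebra `D` of `A` with `A = D ⊕ J` as `T`-modules
and `π` restricting to an algebra isomorphism `D ≅ Q`. -/
theorem wedderburn_malcev_square_zero
    {T : Type u} {A : Type v} {Q : Type w}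
    [CommRing T] [Ring A] [Algebra T A] [Ring Q] [Algebra T Q]
    (J : Submodule T A)
    (hJl : ∀ a : A, ∀ x ∈ J, a * x ∈ J) (hJr : ∀ a : A, ∀ x ∈ J, x * a ∈ J)
    (hJ2 : ∀ x ∈ J, ∀ y ∈ J, x * y = 0)
    (π : A →ₐ[T] Q) (hπ : Function.Surjective π)
    (hker : ∀ a : A, π a = 0 ↔ a ∈ J)
    (hQproj : Module.Projective T Q)
    (hH2 : ∀ (M : Type (max u v w)) [AddCommGroup M] [Module T M] [Module Q M]
      [Module Qᵐᵒᵖ M] [IsScalarTower T Q M] [IsScalarTower T Qᵐᵒᵖ M]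
      [SMulCommClass Q Qᵐᵒᵖ M],
      ∀ Φ : Q →ₗ[T] Q →ₗ[T] M,
        (∀ x y z : Q,
          x • Φ y z - Φ (x * y) z + Φ x (y * z) - op z • Φ x y = 0) →
        ∃ h : Q →ₗ[T] M, ∀ x y : Q,
          Φ x y = x • h y - h (x * y) + op y • h x) :
    ∃ D : Subalgebra T A, IsCompl (Subalgebra.toSubmodule D) J ∧
      Function.Bijective (fun d : D => π (d : A)) := by
  classical
  obtain ⟨s, hs0⟩ := Module.projective_lifting_property π.toLinearMap LinearMap.id hπ
  have hs : ∀ q : Q, π (s q) = q := fun q => DFunLike.congr_fun hs0 q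
  letI instQ : Module Q (WMaux.M J) := WMaux.modQ J π hJl hJ2 hker s hs
  letI instQop : Module Qᵐᵒᵖ (WMaux.M J) := WMaux.modQop J π hJr hJ2 hker s hs
  haveI t1 : IsScalarTower T Q (WMaux.M J) := ⟨fun t x u => WMaux.Mext J _ _ (by
    show s (t • x) * (u.down : A) = t • (s x * (u.down : A))
    rw [map_smul, smul_mul_assoc])⟩
  haveI t2 : IsScalarTower T Qᵐᵒᵖ (WMaux.M J) := ⟨fun t y u => WMaux.Mext J _ _ (by
    show (u.down : A) * s (t • y).unop = t • ((u.down : A) * s y.unop)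
    rw [MulOpposite.unop_smul, map_smul, mul_smul_comm])⟩
  haveI t3 : SMulCommClass Q Qᵐᵒᵖ (WMaux.M J) := ⟨fun x y u => WMaux.Mext J _ _ (by
    show s x * ((u.down : A) * s y.unop) = (s x * (u.down : A)) * s y.unop
    rw [mul_assoc])⟩
  have memΦ : ∀ x y : Q, s x * s y - s (x * y) ∈ J := fun x y =>
    (hker _).1 (by rw [map_sub, map_mul, hs, hs, hs, sub_self])
  set Φ : Q →ₗ[T] Q →ₗ[T] WMaux.M J := LinearMap.mk₂ T
    (fun x y => (⟨⟨s x * s y - s (x * y), memΦ x y⟩⟩ : WMaux.M J))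
    (fun x₁ x₂ y => WMaux.Mext J _ _ (by
      show s (x₁ + x₂) * s y - s ((x₁ + x₂) * y) =
        (s x₁ * s y - s (x₁ * y)) + (s x₂ * s y - s (x₂ * y))
      rw [add_mul, map_add, map_add, add_mul]; abel))
    (fun c x y => WMaux.Mext J _ _ (by
      show s (c • x) * s y - s ((c • x) * y) = c • (s x * s y - s (x * y))
      rw [smul_mul_assoc, map_smul, map_smul, smul_mul_assoc, smul_sub]))
    (fun x y₁ y₂ => WMaux.Mext J _ _ (by
      show s x * s (y₁ + y₂) - s (x * (y₁ + y₂)) =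
        (s x * s y₁ - s (x * y₁)) + (s x * s y₂ - s (x * y₂))
      rw [mul_add, map_add, map_add, mul_add]; abel))
    (fun c x y => WMaux.Mext J _ _ (by
      show s x * s (c • y) - s (x * (c • y)) = c • (s x * s y - s (x * y))
      rw [mul_smul_comm, map_smul, map_smul, mul_smul_comm, smul_sub]))
    with hΦ
  have hcoc : ∀ x y z : Q,
      x • Φ y z - Φ (x * y) z + Φ x (y * z) - op z • Φ x y = 0 := by
    intro x y z
    refine WMaux.Mext J _ _ ?_
    show s x * (s y * s z - s (y * z)) - (s (x * y) * s z - s (x * y * z))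
        + (s x * s (y * z) - s (x * (y * z)))
        - (s x * s y - s (x * y)) * s z = (0 : A)
    rw [← mul_assoc x y z]
    noncomm_ring
  obtain ⟨h, hh⟩ := hH2 (WMaux.M J) Φ hcoc
  have hhval : ∀ x y : Q, s x * s y - s (x * y) =
      s x * ((h y).down : A) - ((h (x * y)).down : A) + ((h x).down : A) * s y := by
    intro x y
    have := congrArg (fun m : WMaux.M J => ((m.down : A))) (hh x y)
    exact this
  set f : Q →ₗ[T] A :=
    s - (J.subtype.comp ((ULift.moduleEquiv : WMaux.M J ≃ₗ[T] ↥J).toLinearMap.comp h))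
    with hf
  have hfval : ∀ q : Q, f q = s q - ((h q).down : A) := fun q => rfl
  have hmul : ∀ x y : Q, f (x * y) = f x * f y := by
    intro x y
    rw [hfval, hfval, hfval]
    have hnil : ((h x).down : A) * ((h y).down : A) = 0 :=
      hJ2 _ (h x).down.2 _ (h y).down.2
    rw [mul_sub, sub_mul, sub_mul, hnil, sub_zero,
      sub_eq_iff_eq_add.mp (hhval x y)]
    abel
  have hπf : ∀ q : Q, π (f q) = q := fun q => by
    rw [hfval, map_sub, hs, (hker _).2 (h q).down.2, sub_zero]
  have hone : f 1 = 1 := by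
    have he : f 1 = f 1 * f 1 := by rw [← hmul, one_mul]
    have hn : (1 : A) - f 1 ∈ J := (hker _).1 (by rw [map_sub, map_one, hπf, sub_self])
    have hn2 : ((1 : A) - f 1) * ((1 : A) - f 1) = 0 := hJ2 _ hn _ hn
    rw [mul_sub, sub_mul, sub_mul, mul_one, one_mul, mul_one,
      sub_eq_zero.mpr he, sub_zero] at hn2
    exact (sub_eq_zero.mp hn2).symm
  set ψ : Q →ₐ[T] A := AlgHom.ofLinearMap f hone hmul with hψ
  have hψval : ∀ q : Q, ψ q = f q := fun q => rfl
  have hπψ : ∀ q : Q, π (ψ q) = q := fun q => hπf q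
  refine ⟨ψ.range, ⟨?_, ?_⟩, ?_, ?_⟩
  · rw [Submodule.disjoint_def]
    intro a ha haJ
    obtain ⟨q, hq⟩ := ha
    have hq' : ψ q = a := hq
    have : q = 0 := by rw [← hπψ q, hq', (hker a).2 haJ]
    rw [← hq', this, map_zero]
  · rw [codisjoint_iff, eq_top_iff]
    intro a _
    refine Submodule.mem_sup.mpr ⟨ψ (π a), ⟨π a, rfl⟩, a - ψ (π a),
      (hker _).1 (by rw [map_sub, hπψ, sub_self]), by abel⟩
  · intro d₁ d₂ hd
    obtain ⟨q₁, hq₁⟩ := d₁.2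
    obtain ⟨q₂, hq₂⟩ := d₂.2
    have hq₁' : ψ q₁ = (d₁ : A) := hq₁
    have hq₂' : ψ q₂ = (d₂ : A) := hq₂
    have hq : q₁ = q₂ := by
      rw [← hπψ q₁, ← hπψ q₂, hq₁', hq₂']
      exact hd
    exact Subtype.ext (by rw [← hq₁', ← hq₂', hq])
  · intro q
    exact ⟨⟨ψ q, ⟨q, rfl⟩⟩, hπψ q⟩
end

section
/- Let A be a unital algebra over a commutative ring T, J an ideal with J² = 0, κ : A/J → A a T-linear section of π : A → A/J, and h : A/J → J a T-linear map such that κ(xy) − κ(x)κ(y) = x·h(y) − h(xy) + h(x)·y for all x, y. Then p = κ + h : A/J → A is a T-algebra homomorphism splitting π, i.e., π ∘ p = id and p(xy) = p(x)p(y). -/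
/-! Expanding `(κ x + h x) * (κ y + h y)` and using `h x * h y = 0`, the cocycle identity is exactly
multiplicativity of `κ + h`. Then `(κ + h) 1` is an idempotent congruent to `1` modulo the
square-zero ideal `J`, and an idempotent differing from `1` by a nilpotent is `1`. -/

universe u v w

theorem IsIdempotentElem.eq_one_of_sub_one_mul_self_eq_zero {R : Type*} [Ring R] {e : R}
    (he : IsIdempotentElem e) (hsq : (e - 1) * (e - 1) = 0) : e = 1 :=
  eq_of_isNilpotent_sub_of_isIdempotentElem_of_commute he .one ⟨2, by rwa [sq]⟩
    (.one_right e)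

theorem add_apply_mul_of_coboundary {Q A : Type*} [Mul Q] [Ring A] (κ h : Q → A)
    (hh : ∀ x y, h x * h y = 0)
    (hcob : ∀ x y, κ (x * y) - κ x * κ y = κ x * h y - h (x * y) + h x * κ y) (x y : Q) :
    κ (x * y) + h (x * y) = (κ x + h x) * (κ y + h y) := by
  rw [eq_add_of_sub_eq (hcob x y), add_mul, mul_add, mul_add, hh]
  abel

theorem section_plus_coboundary_is_algebra_hom_general
    {T : Type u} {A : Type v} {Q : Type w}
    [CommRing T] [Ring A] [Algebra T A] [Ring Q] [Algebra T Q]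
    (J : Submodule T A)
    (hJ2 : ∀ x ∈ J, ∀ y ∈ J, x * y = 0)
    (π : A →ₐ[T] Q)
    (hker : ∀ a : A, π a = 0 ↔ a ∈ J)
    (κ : Q →ₗ[T] A) (hκ : ∀ x : Q, π (κ x) = x)
    (h : Q →ₗ[T] A) (hhJ : ∀ x : Q, h x ∈ J)
    (hcob : ∀ x y : Q,
      κ (x * y) - κ x * κ y = κ x * h y - h (x * y) + h x * κ y) :
    (∀ x : Q, π ((κ + h) x) = x) ∧
      (∀ x y : Q, (κ + h) (x * y) = (κ + h) x * (κ + h) y) ∧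
      (κ + h) 1 = 1 := by
  have hsec : ∀ x : Q, π ((κ + h) x) = x := fun x => by
    rw [LinearMap.add_apply, map_add, hκ, (hker (h x)).mpr (hhJ x), add_zero]
  have hmul : ∀ x y : Q, (κ + h) (x * y) = (κ + h) x * (κ + h) y :=
    add_apply_mul_of_coboundary κ h (fun x y => hJ2 _ (hhJ x) _ (hhJ y)) hcob
  refine ⟨hsec, hmul, ?_⟩
  have hidem : IsIdempotentElem ((κ + h) 1) := by
    rw [IsIdempotentElem, ← hmul, mul_one]
  have hmem : (κ + h) 1 - 1 ∈ J := by
    rw [← hker, map_sub, hsec 1, map_one, sub_self]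
  exact hidem.eq_one_of_sub_one_mul_self_eq_zero (hJ2 _ hmem _ hmem)

/-- let `J` be a two-sided ideal of `A` with `J² = 0`,
`π : A → Q` a surjective algebra map with kernel `J`, `κ : Q → A` a `T`-linear
section of `π`, and `h : Q → J` a `T`-linear map such that
`κ(xy) − κ(x)κ(y) = x·h(y) − h(xy) + h(x)·y` (actions via the lift `κ`).
Then `p = κ + h` is a `T`-algebra homomorphism splitting `π`:
`π ∘ p = id`, `p(xy) = p(x)p(y)` and `p 1 = 1`. -/
theorem section_plus_coboundary_is_algebra_hom
    {T : Type u} {A : Type v} {Q : Type w}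
    [CommRing T] [Ring A] [Algebra T A] [Ring Q] [Algebra T Q]
    (J : Submodule T A)
    (hJl : ∀ a : A, ∀ x ∈ J, a * x ∈ J) (hJr : ∀ a : A, ∀ x ∈ J, x * a ∈ J)
    (hJ2 : ∀ x ∈ J, ∀ y ∈ J, x * y = 0)
    (π : A →ₐ[T] Q) (hπ : Function.Surjective π)
    (hker : ∀ a : A, π a = 0 ↔ a ∈ J)
    (κ : Q →ₗ[T] A) (hκ : ∀ x : Q, π (κ x) = x)
    (h : Q →ₗ[T] A) (hhJ : ∀ x : Q, h x ∈ J)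
    (hcob : ∀ x y : Q,
      κ (x * y) - κ x * κ y = κ x * h y - h (x * y) + h x * κ y) :
    (∀ x : Q, π ((κ + h) x) = x) ∧
      (∀ x y : Q, (κ + h) (x * y) = (κ + h) x * (κ + h) y) ∧
      (κ + h) 1 = 1 :=
  section_plus_coboundary_is_algebra_hom_general J hJ2 π hker κ hκ h hhJ hcob
end

section
/- Let A be a unital algebra over a commutative ring T with ideal J satisfying J^k = 0, and suppose B and C are subalgebras with A = B ⊕ J = C ⊕ J as T-modules. Let q, r : A → A be the projections onto B and C along J. Then the induced maps p, s : A/J → A (with p∘π = q, s∘π = r) are algebra homomorphisms, and w = p − s maps A/J into J and is a derivation of A/J with values in the (A/J)-bimodule J (action via p, or via the canonical quotient structure when J² = 0). -/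
universe u v w

/-- let `J` be a two-sided ideal of `A` with `J^k = 0`, let
`π : A → Q` be a surjective algebra map with kernel `J` (so `Q ≅ A/J`), and
let `B`, `C` be subalgebras with `A = B ⊕ J = C ⊕ J` as `T`-modules, with
projections `q, r : A → A` onto `B`, `C` along `J`.  Then the induced maps
`p, s : Q → A` (with `p ∘ π = q`, `s ∘ π = r`) are algebra homomorphisms,
`w = p − s` maps `Q` into `J`, and `w` is a `(p,s)`-derivation of `Q` with
values in `J`. -/
theorem complement_projections_derivation
    {T : Type u} {A : Type v} {Q : Type w}
    [CommRing T] [Ring A] [Algebra T A] [Ring Q] [Algebra T Q]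
    (J : Submodule T A)
    (hJl : ∀ a : A, ∀ x ∈ J, a * x ∈ J) (hJr : ∀ a : A, ∀ x ∈ J, x * a ∈ J)
    (k : ℕ) (hk : 1 ≤ k) (hJk : J ^ k = ⊥)
    (π : A →ₐ[T] Q) (hπ : Function.Surjective π)
    (hker : ∀ a : A, π a = 0 ↔ a ∈ J)
    (B C : Subalgebra T A)
    (hB : IsCompl (Subalgebra.toSubmodule B) J)
    (hC : IsCompl (Subalgebra.toSubmodule C) J)
    (q r : A →ₗ[T] A)
    (hqB : ∀ a : A, q a ∈ B) (hqJ : ∀ a : A, a - q a ∈ J)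
    (hrC : ∀ a : A, r a ∈ C) (hrJ : ∀ a : A, a - r a ∈ J)
    (p s : Q →ₗ[T] A)
    (hp : ∀ a : A, p (π a) = q a) (hs : ∀ a : A, s (π a) = r a) :
    (∀ x y : Q, p (x * y) = p x * p y) ∧ p 1 = 1 ∧
      (∀ x y : Q, s (x * y) = s x * s y) ∧ s 1 = 1 ∧
      (∀ x : Q, p x - s x ∈ J) ∧
      (∀ x y : Q,
        p (x * y) - s (x * y) = p x * (p y - s y) + (p x - s x) * s y) := by
  have hBJ : ∀ x : A, x ∈ B → x ∈ J → x = 0 := fun x hx hxJ =>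
    Submodule.disjoint_def.mp hB.disjoint x hx hxJ
  have hCJ : ∀ x : A, x ∈ C → x ∈ J → x = 0 := fun x hx hxJ =>
    Submodule.disjoint_def.mp hC.disjoint x hx hxJ
  -- q is multiplicative
  have hqmul : ∀ a b : A, q (a * b) = q a * q b := by
    intro a b
    have h1 : q (a * b) - q a * q b ∈ J := by
      have h2 : a * b - q a * q b ∈ J := by
        have : a * b - q a * q b = a * (b - q b) + (a - q a) * q b := by noncomm_ring
        rw [this]
        exact J.add_mem (hJl a _ (hqJ b)) (hJr (q b) _ (hqJ a))
      have h3 : q (a * b) - q a * q b = (a * b - q a * q b) - (a * b - q (a * b)) := by noncomm_ring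
      rw [h3]; exact J.sub_mem h2 (hqJ (a * b))
    have h4 : q (a * b) - q a * q b ∈ B := B.sub_mem (hqB _) (B.mul_mem (hqB a) (hqB b))
    exact sub_eq_zero.mp (hBJ _ h4 h1)
  have hrmul : ∀ a b : A, r (a * b) = r a * r b := by
    intro a b
    have h1 : r (a * b) - r a * r b ∈ J := by
      have h2 : a * b - r a * r b ∈ J := by
        have : a * b - r a * r b = a * (b - r b) + (a - r a) * r b := by noncomm_ring
        rw [this]
        exact J.add_mem (hJl a _ (hrJ b)) (hJr (r b) _ (hrJ a))
      have h3 : r (a * b) - r a * r b = (a * b - r a * r b) - (a * b - r (a * b)) := by noncomm_ring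
      rw [h3]; exact J.sub_mem h2 (hrJ (a * b))
    have h4 : r (a * b) - r a * r b ∈ C := C.sub_mem (hrC _) (C.mul_mem (hrC a) (hrC b))
    exact sub_eq_zero.mp (hCJ _ h4 h1)
  have hq1 : q 1 = 1 := by
    have h1 : q 1 - 1 ∈ J := by
      have := hqJ 1
      have h : q 1 - 1 = -(1 - q 1) := by noncomm_ring
      rw [h]; exact J.neg_mem this
    exact sub_eq_zero.mp (hBJ _ (B.sub_mem (hqB 1) B.one_mem) h1)
  have hr1 : r 1 = 1 := by
    have h1 : r 1 - 1 ∈ J := by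
      have := hrJ 1
      have h : r 1 - 1 = -(1 - r 1) := by noncomm_ring
      rw [h]; exact J.neg_mem this
    exact sub_eq_zero.mp (hCJ _ (C.sub_mem (hrC 1) C.one_mem) h1)
  have hpmul : ∀ x y : Q, p (x * y) = p x * p y := by
    intro x y
    obtain ⟨a, rfl⟩ := hπ x; obtain ⟨b, rfl⟩ := hπ y
    rw [← map_mul, hp, hp, hp, hqmul]
  have hsmul : ∀ x y : Q, s (x * y) = s x * s y := by
    intro x y
    obtain ⟨a, rfl⟩ := hπ x; obtain ⟨b, rfl⟩ := hπ y
    rw [← map_mul, hs, hs, hs, hrmul]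
  have hp1 : p 1 = 1 := by
    have := hp 1; rw [map_one] at this; rw [this, hq1]
  have hs1 : s 1 = 1 := by
    have := hs 1; rw [map_one] at this; rw [this, hr1]
  refine ⟨hpmul, hp1, hsmul, hs1, ?_, ?_⟩
  · intro x
    obtain ⟨a, rfl⟩ := hπ x
    rw [hp, hs]
    have h : q a - r a = (a - r a) - (a - q a) := by noncomm_ring
    rw [h]; exact J.sub_mem (hrJ a) (hqJ a)
  · intro x y
    rw [hpmul, hsmul]; noncomm_ring
end
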